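/- arXiv:1710.02821 — 6 statements merged into one kernel-verified Lean document; each statement's English description precedes it below -/
import Mathlib

section
/- Let q = ⌊k/n_I⌋ and r = k mod n_I with n_I ≥ 1. Then q·n_I² + r² − k ≤ k·(n_I − 1), with equality if and only if r = 0. -/
/-- With `q = ⌊k/n_I⌋` and `r = k % n_I`, `n_I ≥ 1`:
`q·n_I² + r² − k ≤ k·(n_I − 1)`, with equality iff `r = 0`. -/
theorem qnIsq_bound (nI k : ℕ) (hnI : 1 ≤ nI) :
    ((k / nI : ℕ) : ℤ) * (nI : ℤ) ^ 2 + ((k % nI : ℕ) : ℤ) ^ 2 - (k : ℤ)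
      ≤ (k : ℤ) * ((nI : ℤ) - 1) ∧
    (((k / nI : ℕ) : ℤ) * (nI : ℤ) ^ 2 + ((k % nI : ℕ) : ℤ) ^ 2 - (k : ℤ)
      = (k : ℤ) * ((nI : ℤ) - 1) ↔ k % nI = 0) := by
  have hdm : (nI : ℤ) * ((k / nI : ℕ) : ℤ) + ((k % nI : ℕ) : ℤ) = (k : ℤ) := by
    exact_mod_cast Nat.div_add_mod k nI
  have hr : ((k % nI : ℕ) : ℤ) < (nI : ℤ) := by exact_mod_cast Nat.mod_lt k hnI
  have hr0 : 0 ≤ ((k % nI : ℕ) : ℤ) := by positivity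
  constructor
  · nlinarith [hdm, hr, hr0]
  · constructor
    · intro h
      by_contra hne
      have : 0 < ((k % nI : ℕ) : ℤ) := by
        have := Nat.pos_of_ne_zero hne; exact_mod_cast this
      nlinarith [hdm, hr]
    · intro h
      rw [h] at hdm ⊢
      simp only [Nat.cast_zero] at hdm ⊢
      nlinarith [hdm]
end

section
/- With h_t = min{ s ∈ [n_I] : ∑_{l=1}^{s} g_l ≥ t } and z_t = n_I − h_t (the ε = 0 case), one has z_t = 0 for all t ≥ k − ⌊k/n_I⌋ + 1 and z_t = 1 for t = k − ⌊k/n_I⌋, assuming k > n_I and n_I ≥ 2. -/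
/-- With `z t = n_I − h t` (the `ε = 0` case), `k > n_I`, `n_I ≥ 2`:
`z t = 0` for all `k − ⌊k/n_I⌋ + 1 ≤ t ≤ k`, and `z t = 1` at `t = k − ⌊k/n_I⌋`. -/
theorem z_tail_values (nI k : ℕ) (hnI : 2 ≤ nI) (hk : nI < k) (g h : ℕ → ℕ)
    (hg : ∀ m, g m = if m ≤ k % nI then k / nI + 1 else k / nI)
    (hh : ∀ t, h t = sInf {s : ℕ | s ∈ Finset.Icc 1 nI ∧ t ≤ ∑ l ∈ Finset.Icc 1 s, g l}) :
    (∀ t, k - k / nI + 1 ≤ t → t ≤ k → nI - h t = 0) ∧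
    nI - h (k - k / nI) = 1 := by
  set q := k / nI with hq
  set r := k % nI with hr
  have hrlt : r < nI := Nat.mod_lt _ (by omega)
  have hq1 : 1 ≤ q := Nat.one_le_div_iff (by omega) |>.mpr (le_of_lt hk)
  have hqr : nI * q + r = k := by
    have := Nat.div_add_mod k nI
    rw [← hq, ← hr] at this; omega
  -- closed form for partial sums
  have hS : ∀ s, ∑ l ∈ Finset.Icc 1 s, g l = s * q + min s r := by
    intro s
    induction s with
    | zero => simp
    | succ n ih =>
      rw [Finset.sum_Icc_succ_top (by omega), ih, hg]
      have hlin : (n + 1) * q = n * q + q := by ring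
      by_cases hc : n + 1 ≤ r
      · simp [hc]; omega
      · simp [hc]; omega
  have hmul : ∀ a b : ℕ, a ≤ b → a * q ≤ b * q := fun a b hab =>
    Nat.mul_le_mul_right _ hab
  constructor
  · intro t ht1 ht2
    have hmem : nI ∈ {s : ℕ | s ∈ Finset.Icc 1 nI ∧ t ≤ ∑ l ∈ Finset.Icc 1 s, g l} := by
      constructor
      · simp; omega
      · rw [hS]; have : min nI r = r := by omega
        omega
    have hlb : ∀ m ∈ {s : ℕ | s ∈ Finset.Icc 1 nI ∧ t ≤ ∑ l ∈ Finset.Icc 1 s, g l}, nI ≤ m := by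
      rintro m ⟨hm1, hm2⟩
      simp only [Finset.mem_Icc] at hm1
      by_contra hcon
      push_neg at hcon
      rw [hS] at hm2
      have h1 : m * q ≤ (nI - 1) * q := hmul _ _ (by omega)
      have h2 : (nI - 1) * q + q = nI * q := by
        have : (nI - 1) + 1 = nI := by omega
        calc (nI - 1) * q + q = ((nI - 1) + 1) * q := by ring
          _ = nI * q := by rw [this]
      have h3 : min m r ≤ r := min_le_right _ _
      omega
    have : h t = nI := by
      rw [hh]
      exact le_antisymm (Nat.sInf_le hmem) (le_csInf ⟨_, hmem⟩ hlb)
    omega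
  · have hmem : nI - 1 ∈ {s : ℕ | s ∈ Finset.Icc 1 nI ∧ k - q ≤ ∑ l ∈ Finset.Icc 1 s, g l} := by
      constructor
      · simp; omega
      · rw [hS]
        have h3 : min (nI - 1) r = r := by omega
        have h2 : (nI - 1) * q + q = nI * q := by
          have : (nI - 1) + 1 = nI := by omega
          calc (nI - 1) * q + q = ((nI - 1) + 1) * q := by ring
            _ = nI * q := by rw [this]
        omega
    have hlb : ∀ m ∈ {s : ℕ | s ∈ Finset.Icc 1 nI ∧ k - q ≤ ∑ l ∈ Finset.Icc 1 s, g l},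
        nI - 1 ≤ m := by
      rintro m ⟨hm1, hm2⟩
      simp only [Finset.mem_Icc] at hm1
      by_contra hcon
      push_neg at hcon
      rw [hS] at hm2
      have h1 : m * q ≤ (nI - 2) * q := hmul _ _ (by omega)
      have h2 : (nI - 2) * q + q = (nI - 1) * q := by
        have : (nI - 2) + 1 = nI - 1 := by omega
        calc (nI - 2) * q + q = ((nI - 2) + 1) * q := by ring
          _ = (nI - 1) * q := by rw [this]
      have h2' : (nI - 1) * q + q = nI * q := by
        have : (nI - 1) + 1 = nI := by omega
        calc (nI - 1) * q + q = ((nI - 1) + 1) * q := by ring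
          _ = nI * q := by rw [this]
      have h3 : min m r ≤ r := min_le_right _ _
      omega
    have : h (k - q) = nI - 1 := by
      rw [hh]
      exact le_antisymm (Nat.sInf_le hmem) (le_csInf ⟨_, hmem⟩ hlb)
    omega
end

section
/- For ε = 0 (β_c = 0), the sum ∑_{i=1}^{k} z_i with z_i = n_I − h_i equals (n_I − 1)·k − (q·n_I² + r² − k)/2, where q = ⌊k/n_I⌋ and r = k mod n_I. Equivalently, ∑_{i=1}^k (n_I − h_i) = ∑_{t=1}^{n_I} (n_I − t)·g_t. -/
/-- For `ε = 0`: `∑_{i=1}^{k} (n_I − h_i)` equals `∑_{t=1}^{n_I} (n_I − t)·g_t`,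
and `2·∑_{i=1}^k (n_I − h_i) = 2(n_I−1)k − (q·n_I² + r² − k)` with
`q = ⌊k/n_I⌋`, `r = k % n_I`. -/
theorem sum_z_eps0 (nI k : ℕ) (hnI : 1 ≤ nI) (hk : nI < k) (g h : ℕ → ℕ)
    (hg : ∀ m, g m = if m ≤ k % nI then k / nI + 1 else k / nI)
    (hh : ∀ t, h t = sInf {s : ℕ | s ∈ Finset.Icc 1 nI ∧ t ≤ ∑ l ∈ Finset.Icc 1 s, g l}) :
    (∑ i ∈ Finset.Icc 1 k, ((nI : ℤ) - h i)
        = ∑ t ∈ Finset.Icc 1 nI, ((nI : ℤ) - t) * g t) ∧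
    2 * ∑ i ∈ Finset.Icc 1 k, ((nI : ℤ) - h i)
        = 2 * ((nI : ℤ) - 1) * k
          - (((k / nI : ℕ) : ℤ) * (nI : ℤ) ^ 2 + ((k % nI : ℕ) : ℤ) ^ 2 - (k : ℤ)) := by
  have hr : k % nI < nI := Nat.mod_lt _ (by omega)
  set S : ℕ → ℕ := fun s => ∑ l ∈ Finset.Icc 1 s, g l with hSdef
  have hgpos : ∀ m, 1 ≤ g m := fun m => by
    rw [hg]
    have : 1 ≤ k / nI := (Nat.one_le_div_iff (by omega)).mpr hk.le
    split <;> omega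
  have hSstep : ∀ s, S (s + 1) = S s + g (s + 1) := fun s => by
    simp [hSdef, Finset.sum_Icc_succ_top (Nat.le_add_left 1 s)]
  have hSmono : StrictMono S := strictMono_nat_of_lt_succ fun s => by
    have := hgpos (s + 1); rw [hSstep]; omega
  have hS0 : S 0 = 0 := by simp [hSdef]
  have hfil : (Finset.Icc 1 nI).filter (fun l => l ≤ k % nI) = Finset.Icc 1 (k % nI) := by
    ext x; simp only [Finset.mem_filter, Finset.mem_Icc]; omega
  have hSnI : S nI = k := by
    have h1 : S nI = ∑ l ∈ Finset.Icc 1 nI, (k / nI + if l ≤ k % nI then 1 else 0) := by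
      apply Finset.sum_congr rfl; intro l _; rw [hg]; split <;> omega
    rw [h1, Finset.sum_add_distrib, Finset.sum_const, Nat.card_Icc, ← Finset.sum_filter, hfil,
      Finset.sum_const, Nat.card_Icc]
    simp only [smul_eq_mul, mul_one, Nat.add_sub_cancel]
    rw [Nat.mul_comm]
    exact Nat.div_add_mod' k nI
  have hchar : ∀ i t, 1 ≤ i → i ≤ k → 1 ≤ t → t ≤ nI →
      (h i = t ↔ (S (t - 1) < i ∧ i ≤ S t)) := by
    intro i t hi1 hik ht1 htn
    have hA : h i = sInf {s : ℕ | s ∈ Finset.Icc 1 nI ∧ i ≤ S s} := hh i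
    have hne : nI ∈ {s : ℕ | s ∈ Finset.Icc 1 nI ∧ i ≤ S s} := by
      simp only [Set.mem_setOf_eq, Finset.mem_Icc]
      exact ⟨⟨hnI, le_rfl⟩, by rw [hSnI]; exact hik⟩
    constructor
    · rintro rfl
      have hmem := Nat.sInf_mem ⟨nI, hne⟩
      rw [← hA] at hmem
      refine ⟨?_, hmem.2⟩
      by_contra hle
      push_neg at hle
      rcases Nat.eq_or_lt_of_le ht1 with h1 | h1
      · rw [← h1] at hle; rw [show (1:ℕ) - 1 = 0 from rfl, hS0] at hle; omega
      · have hmem2 : h i - 1 ∈ {s : ℕ | s ∈ Finset.Icc 1 nI ∧ i ≤ S s} := by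
          simp only [Set.mem_setOf_eq, Finset.mem_Icc]
          exact ⟨⟨by omega, by omega⟩, hle⟩
        have := Nat.sInf_le hmem2
        rw [← hA] at this
        omega
    · rintro ⟨hlt, hle⟩
      have htA : t ∈ {s : ℕ | s ∈ Finset.Icc 1 nI ∧ i ≤ S s} := by
        simp only [Set.mem_setOf_eq, Finset.mem_Icc]
        exact ⟨⟨ht1, htn⟩, hle⟩
      have h1 : sInf {s : ℕ | s ∈ Finset.Icc 1 nI ∧ i ≤ S s} ≤ t := Nat.sInf_le htA
      have hmem := Nat.sInf_mem ⟨t, htA⟩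
      have h2 : t ≤ sInf {s : ℕ | s ∈ Finset.Icc 1 nI ∧ i ≤ S s} := by
        by_contra hc
        push_neg at hc
        have hle' : sInf {s : ℕ | s ∈ Finset.Icc 1 nI ∧ i ≤ S s} ≤ t - 1 := by omega
        have hmono := hSmono.monotone hle'
        have := hmem.2
        omega
      rw [hA]; omega
  have hmaps : ∀ i ∈ Finset.Icc 1 k, h i ∈ Finset.Icc 1 nI := by
    intro i hi
    simp only [Finset.mem_Icc] at hi
    have hne : ({s : ℕ | s ∈ Finset.Icc 1 nI ∧ i ≤ S s}).Nonempty :=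
      ⟨nI, by
        simp only [Set.mem_setOf_eq, Finset.mem_Icc]
        exact ⟨⟨hnI, le_rfl⟩, by rw [hSnI]; exact hi.2⟩⟩
    have := Nat.sInf_mem hne
    rw [← hh i] at this
    exact this.1
  have hfiber : ∀ t ∈ Finset.Icc 1 nI,
      (Finset.Icc 1 k).filter (fun i => h i = t) = Finset.Ioc (S (t - 1)) (S t) := by
    intro t ht
    simp only [Finset.mem_Icc] at ht
    ext i
    simp only [Finset.mem_filter, Finset.mem_Icc, Finset.mem_Ioc]
    constructor
    · rintro ⟨⟨hi1, hik⟩, hit⟩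
      exact (hchar i t hi1 hik ht.1 ht.2).mp hit
    · rintro ⟨h1, h2⟩
      have hi1 : 1 ≤ i := by omega
      have hik : i ≤ k := le_trans h2 (by rw [← hSnI]; exact hSmono.monotone ht.2)
      exact ⟨⟨hi1, hik⟩, (hchar i t hi1 hik ht.1 ht.2).mpr ⟨h1, h2⟩⟩
  have main : ∑ i ∈ Finset.Icc 1 k, ((nI : ℤ) - h i)
      = ∑ t ∈ Finset.Icc 1 nI, ((nI : ℤ) - t) * g t := by
    rw [← Finset.sum_fiberwise_of_maps_to hmaps (fun i => ((nI : ℤ) - h i))]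
    apply Finset.sum_congr rfl
    intro t ht
    have hcon : ∀ i ∈ (Finset.Icc 1 k).filter (fun i => h i = t),
        ((nI : ℤ) - h i) = (nI : ℤ) - t := by
      intro i hi
      simp only [Finset.mem_filter] at hi
      rw [hi.2]
    rw [Finset.sum_congr rfl hcon, Finset.sum_const, hfiber t ht, Nat.card_Ioc]
    simp only [Finset.mem_Icc] at ht
    have hst : S t = S (t - 1) + g t := by
      have := hSstep (t - 1)
      rwa [Nat.sub_add_cancel ht.1] at this
    rw [hst]
    simp [mul_comm]
  refine ⟨main, ?_⟩
  rw [main]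
  have hsum : ∀ n : ℕ, 2 * ∑ t ∈ Finset.Icc 1 n, (t : ℤ) = n * (n + 1) := by
    intro n
    induction n with
    | zero => simp
    | succ m ih =>
      rw [Finset.sum_Icc_succ_top (by omega)]
      push_cast
      push_cast at ih
      linarith
  have hsplit : ∑ t ∈ Finset.Icc 1 nI, ((nI : ℤ) - t) * g t
      = ((k / nI : ℕ) : ℤ) * ∑ t ∈ Finset.Icc 1 nI, ((nI : ℤ) - t)
        + ∑ t ∈ Finset.Icc 1 (k % nI), ((nI : ℤ) - t) := by
    have hcon : ∀ t ∈ Finset.Icc 1 nI, ((nI : ℤ) - t) * g t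
        = ((k / nI : ℕ) : ℤ) * ((nI : ℤ) - t) + (if t ≤ k % nI then ((nI : ℤ) - t) else 0) := by
      intro t _
      rw [hg]
      split <;> push_cast <;> ring
    rw [Finset.sum_congr rfl hcon, Finset.sum_add_distrib, ← Finset.mul_sum,
      ← Finset.sum_filter, hfil]
  rw [hsplit]
  have hexp : ∀ n : ℕ, ∑ t ∈ Finset.Icc 1 n, ((nI : ℤ) - t)
      = (n : ℤ) * nI - ∑ t ∈ Finset.Icc 1 n, (t : ℤ) := by
    intro n
    rw [Finset.sum_sub_distrib, Finset.sum_const, Nat.card_Icc]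
    simp
  rw [hexp nI, hexp (k % nI)]
  have hkz : (k : ℤ) = ((k / nI : ℕ) : ℤ) * nI + ((k % nI : ℕ) : ℤ) := by
    exact_mod_cast (Nat.div_add_mod' k nI).symm
  linear_combination (-((k / nI : ℕ) : ℤ)) * hsum nI - hsum (k % nI) + (1 - 2 * (nI : ℤ)) * hkz
end

section
/- For a clustered DSS with k > n_I and n_I ≥ 2, the intra-cluster-only MBR bandwidth satisfies γ_mbr^(0) = M·(n_I−1)/∑_{i=1}^k z_i ≤ 2M/k, where z_i = n_I − h_i; equality holds if and only if n_I divides k. -/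
private lemma gauss_icc (n : ℕ) : (∑ i ∈ Finset.Icc 1 n, i) * 2 = n * (n + 1) := by
  induction n with
  | zero => simp
  | succ m ih =>
    rw [Finset.sum_Icc_succ_top (by omega), add_mul, ih]
    ring

/-- Intra-cluster-only MBR bandwidth: for `k > n_I ≥ 2`, `M > 0`,
`γ_mbr^(0) = M(n_I−1)/∑_{i=1}^k z_i ≤ 2M/k` with `z_i = n_I − h_i`,
and equality holds iff `n_I ∣ k`. -/
theorem gamma_mbr_zero_bound (nI k : ℕ) (M : ℝ) (hnI : 2 ≤ nI) (hk : nI < k)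
    (hM : 0 < M) (g h : ℕ → ℕ)
    (hg : ∀ m, g m = if m ≤ k % nI then k / nI + 1 else k / nI)
    (hh : ∀ t, h t = sInf {s : ℕ | s ∈ Finset.Icc 1 nI ∧ t ≤ ∑ l ∈ Finset.Icc 1 s, g l}) :
    M * ((nI : ℝ) - 1) / (∑ i ∈ Finset.Icc 1 k, ((nI : ℝ) - h i)) ≤ 2 * M / k ∧
    (M * ((nI : ℝ) - 1) / (∑ i ∈ Finset.Icc 1 k, ((nI : ℝ) - h i)) = 2 * M / k
      ↔ nI ∣ k) := by
  set q := k / nI with hq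
  set r := k % nI with hr
  have hrlt : r < nI := Nat.mod_lt _ (by omega)
  have hkeq : nI * q + r = k := Nat.div_add_mod k nI
  -- partial sums formula
  have hP : ∀ s, (∑ l ∈ Finset.Icc 1 s, g l) = q * s + min s r := by
    intro s
    induction s with
    | zero => simp
    | succ m ih =>
      rw [Finset.sum_Icc_succ_top (by omega), ih, hg, Nat.mul_succ]
      rcases le_or_gt (m + 1) r with h1 | h1
      · rw [if_pos h1]; omega
      · rw [if_neg (by omega)]; omega
  have hPle : ∀ {s t : ℕ}, s ≤ t → q * s + min s r ≤ q * t + min t r := by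
    intro s t hst
    have := Nat.mul_le_mul_left q hst
    omega
  have hPnI : q * nI + min nI r = k := by
    have : nI * q = q * nI := Nat.mul_comm _ _
    omega
  -- h i belongs to the defining set
  have hset : ∀ i, 1 ≤ i → i ≤ k →
      (h i ∈ Finset.Icc 1 nI ∧ i ≤ ∑ l ∈ Finset.Icc 1 (h i), g l) := by
    intro i h1 h2
    rw [hh]
    have hne : ({s : ℕ | s ∈ Finset.Icc 1 nI ∧ i ≤ ∑ l ∈ Finset.Icc 1 s, g l}).Nonempty :=
      ⟨nI, Finset.mem_Icc.2 ⟨by omega, le_rfl⟩, by rw [hP]; omega⟩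
    exact Nat.sInf_mem hne
  have hmem : ∀ i, 1 ≤ i → i ≤ k → 1 ≤ h i ∧ h i ≤ nI ∧ i ≤ q * h i + min (h i) r := by
    intro i h1 h2
    obtain ⟨hm, hle⟩ := hset i h1 h2
    rw [Finset.mem_Icc] at hm
    rw [hP] at hle
    exact ⟨hm.1, hm.2, hle⟩
  -- h i ≤ s iff i ≤ P s, for s in [1, nI]
  have hiff : ∀ i s, 1 ≤ i → i ≤ k → 1 ≤ s → s ≤ nI →
      (h i ≤ s ↔ i ≤ q * s + min s r) := by
    intro i s h1 h2 hs1 hs2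
    constructor
    · intro hle
      exact le_trans (hmem i h1 h2).2.2 (hPle hle)
    · intro hle
      rw [hh]
      exact Nat.sInf_le (by simp only [Set.mem_setOf_eq, Finset.mem_Icc, hP]; exact ⟨⟨hs1, hs2⟩, hle⟩)
  -- counting: nI - h i = card of filter
  have hcard : ∀ i ∈ Finset.Icc 1 k,
      nI - h i = ((Finset.Icc 1 (nI - 1)).filter (fun s => i ≤ q * s + min s r)).card := by
    intro i hi
    rw [Finset.mem_Icc] at hi
    obtain ⟨hi1, hiN, _⟩ := hmem i hi.1 hi.2
    have hfe : (Finset.Icc 1 (nI - 1)).filter (fun s => i ≤ q * s + min s r)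
        = Finset.Icc (h i) (nI - 1) := by
      ext t
      simp only [Finset.mem_filter, Finset.mem_Icc]
      constructor
      · rintro ⟨⟨ht1, ht2⟩, hts⟩
        exact ⟨(hiff i t hi.1 hi.2 ht1 (by omega)).2 hts, ht2⟩
      · rintro ⟨h1t, ht2⟩
        refine ⟨⟨by omega, ht2⟩, (hiff i t hi.1 hi.2 (by omega) (by omega)).1 h1t⟩
    rw [hfe, Nat.card_Icc]
    omega
  -- the sum in ℕ
  set T : ℕ := ∑ s ∈ Finset.Icc 1 (nI - 1), (q * s + min s r) with hT
  have hSeq : (∑ i ∈ Finset.Icc 1 k, (nI - h i)) = T := by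
    rw [Finset.sum_congr rfl hcard]
    simp only [Finset.card_filter]
    rw [Finset.sum_comm]
    refine Finset.sum_congr rfl ?_
    intro s hs
    rw [Finset.mem_Icc] at hs
    have hPsk : q * s + min s r ≤ k := by
      calc q * s + min s r ≤ q * nI + min nI r := hPle (by omega)
        _ = k := hPnI
    have hfe : ((Finset.Icc 1 k).filter (fun i => i ≤ q * s + min s r))
        = Finset.Icc 1 (q * s + min s r) := by
      ext t
      simp only [Finset.mem_filter, Finset.mem_Icc]
      omega
    rw [← Finset.card_filter, hfe, Nat.card_Icc]
    omega
  -- closed form: 2T = k(nI-1) + r(nI-r)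
  obtain ⟨n, rfl⟩ : ∃ n, nI = n + 1 := ⟨nI - 1, by omega⟩
  have hrn : r ≤ n := by omega
  have hminsum : (∑ s ∈ Finset.Icc 1 n, min s r)
      = (∑ s ∈ Finset.Icc 1 r, s) + (n - r) * r := by
    have e : ∀ m : ℕ, Finset.Icc 1 m = Finset.Ioc 0 m := by
      intro m; ext x; simp only [Finset.mem_Icc, Finset.mem_Ioc]; omega
    have hsplit := Finset.sum_Ioc_consecutive (fun s => min s r) (Nat.zero_le r) hrn
    have e1 : ∑ s ∈ Finset.Ioc 0 r, min s r = ∑ s ∈ Finset.Ioc 0 r, s :=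
      Finset.sum_congr rfl fun x hx => by rw [Finset.mem_Ioc] at hx; omega
    have e2 : ∑ s ∈ Finset.Ioc r n, min s r = (n - r) * r := by
      calc ∑ s ∈ Finset.Ioc r n, min s r = ∑ _s ∈ Finset.Ioc r n, r :=
            Finset.sum_congr rfl fun x hx => by rw [Finset.mem_Ioc] at hx; omega
        _ = (n - r) * r := by rw [Finset.sum_const, Nat.card_Ioc, smul_eq_mul]
    rw [e n, e r, ← hsplit, e1, e2]
  have hTval : 2 * T = k * n + r * (n + 1 - r) := by
    have h1 : T = q * (∑ s ∈ Finset.Icc 1 n, s) + ((∑ s ∈ Finset.Icc 1 r, s) + (n - r) * r) := by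
      rw [hT]
      simp only [Nat.add_sub_cancel]
      rw [Finset.sum_add_distrib, ← Finset.mul_sum, hminsum]
    have hA := gauss_icc n
    have hB := gauss_icc r
    zify [hrn, show r ≤ n + 1 by omega] at h1 hA hB hkeq ⊢
    linear_combination 2 * h1 + (q : ℤ) * hA + hB + (n : ℤ) * hkeq
  -- T positivity
  have hTpos : 0 < T := by
    have : k ≤ k * n := Nat.le_mul_of_pos_right k (by omega)
    omega
  -- real versions
  have hcast : (∑ i ∈ Finset.Icc 1 k, (((n : ℝ) + 1) - h i)) = (T : ℝ) := by
    rw [← hSeq, Nat.cast_sum]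
    refine Finset.sum_congr rfl ?_
    intro i hi
    rw [Finset.mem_Icc] at hi
    obtain ⟨_, hiN, _⟩ := hmem i hi.1 hi.2
    rw [Nat.cast_sub hiN]
    push_cast
    ring
  have hTR : 2 * (T : ℝ) = k * n + r * ((n : ℝ) + 1 - r) := by
    have := hTval
    zify [show r ≤ n + 1 by omega] at this
    exact_mod_cast this
  have hk0 : (0 : ℝ) < k := by exact_mod_cast (by omega : 0 < k)
  have hT0 : (0 : ℝ) < T := by exact_mod_cast hTpos
  have hrnn : (0 : ℝ) ≤ (r : ℝ) * ((n : ℝ) + 1 - r) := by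
    apply mul_nonneg (by positivity)
    have : (r : ℝ) ≤ (n : ℝ) + 1 := by exact_mod_cast (by omega : r ≤ n + 1)
    linarith
  have hcast2 : ((n : ℕ) + 1 : ℕ) = ((n : ℝ) + 1) := by push_cast; ring
  push_cast
  rw [hcast]
  have hsimp : ((n : ℝ) + 1) - 1 = (n : ℝ) := by ring
  rw [hsimp]
  constructor
  · rw [div_le_div_iff₀ hT0 hk0]
    nlinarith [mul_pos hM hk0]
  · constructor
    · intro heq
      rw [div_eq_div_iff hT0.ne' hk0.ne'] at heq
      have hMn : M ≠ 0 := ne_of_gt hM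
      have h2 : (k : ℝ) * n = 2 * T := by
        have : M * ((k : ℝ) * n) = M * (2 * T) := by linarith [heq]
        exact mul_left_cancel₀ hMn this
      have hr0 : (r : ℝ) * ((n : ℝ) + 1 - r) = 0 := by linarith
      have : r = 0 := by
        rcases mul_eq_zero.1 hr0 with h0 | h0
        · exact_mod_cast h0
        · exfalso
          have : (r : ℝ) = (n : ℝ) + 1 := by linarith
          have : r = n + 1 := by exact_mod_cast this
          omega
      exact Nat.dvd_of_mod_eq_zero this
    · intro hdvd
      have hr0 : r = 0 := by
        obtain ⟨c, hc⟩ := hdvd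
        rw [hr, hc, Nat.mul_mod_right]
      rw [div_eq_div_iff hT0.ne' hk0.ne']
      rw [hr0] at hTR
      push_cast at hTR
      linear_combination M * hTR.symm
end

section
/- The ratio of the intra-cluster-only MBR bandwidth to the symmetric MBR bandwidth is bounded: γ_mbr^(0)/γ_mbr^(1) ≤ (2n − k − 1)/(n − 1) = 2 − (k−1)/(n−1), for n > k > n_I ≥ 2 and n = n_I·L. -/
/-!
With `G s = ∑_{l ≤ s} g l`, `h t` is the least `s` with `t ≤ G s`, so `nI - h t` counts the
`s < nI` with `t ≤ G s`; double counting gives `∑_{t ≤ k} (nI - h t) = ∑_{s < nI} G s`.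
Since `g` spreads `k` over `nI` slots as evenly as possible, `G s + G (nI - s) ≥ k`, so pairing
`s` with `nI - s` bounds that sum below by `k (nI - 1) / 2`. This is `γ⁽⁰⁾ ≤ 2M/k`, and
`2M/k = γ⁽¹⁾ (2n - k - 1)/(n - 1)`.
-/

open Finset

noncomputable def threshold (G : ℕ → ℕ) (N t : ℕ) : ℕ := sInf {s | s ∈ Icc 1 N ∧ t ≤ G s}

section Threshold

variable {G : ℕ → ℕ} {N k t s : ℕ}

lemma threshold_le_self : threshold G N t ≤ N := by
  rcases Set.eq_empty_or_nonempty {s | s ∈ Icc 1 N ∧ t ≤ G s} with hempty | hne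
  · rw [threshold, hempty, Nat.sInf_empty]; exact N.zero_le
  · exact (mem_Icc.1 (Nat.sInf_mem hne).1).2

lemma threshold_spec (ht : t ≤ G N) (hN : 1 ≤ N) :
    threshold G N t ∈ Icc 1 N ∧ t ≤ G (threshold G N t) :=
  Nat.sInf_mem (s := {s | s ∈ Icc 1 N ∧ t ≤ G s}) ⟨N, mem_Icc.2 ⟨hN, le_rfl⟩, ht⟩

lemma threshold_le_iff (hG : Monotone G) (ht : t ≤ G N) (hs : s ∈ Icc 1 N) :
    threshold G N t ≤ s ↔ t ≤ G s :=
  ⟨fun h => (threshold_spec ht ((mem_Icc.1 hs).1.trans (mem_Icc.1 hs).2)).2.trans (hG h),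
    fun h => Nat.sInf_le ⟨hs, h⟩⟩

lemma card_filter_threshold_le_eq_sub (ht : t ≤ G N) :
    #{s ∈ Icc 1 (N - 1) | threshold G N t ≤ s} = N - threshold G N t := by
  rcases Nat.eq_zero_or_pos N with rfl | hN
  · simp
  have hθ := mem_Icc.1 (threshold_spec ht hN).1
  rw [show {s ∈ Icc 1 (N - 1) | threshold G N t ≤ s} = Icc (threshold G N t) (N - 1) by
    ext; simp only [mem_filter, mem_Icc]; omega, Nat.card_Icc]
  omega

lemma card_filter_threshold_le_eq_apply (hG : Monotone G) (hGN : G N = k) (hs : s ∈ Icc 1 N) :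
    #{t ∈ Icc 1 k | threshold G N t ≤ s} = G s := by
  have hGs : G s ≤ k := hGN ▸ hG (mem_Icc.1 hs).2
  rw [show {t ∈ Icc 1 k | threshold G N t ≤ s} = Icc 1 (G s) by
    ext t
    simp only [mem_filter, mem_Icc]
    constructor
    · rintro ⟨⟨ht1, htk⟩, hθ⟩
      exact ⟨ht1, (threshold_le_iff hG (hGN ▸ htk) hs).1 hθ⟩
    · rintro ⟨ht1, htG⟩
      exact ⟨⟨ht1, htG.trans hGs⟩, (threshold_le_iff hG (hGN ▸ htG.trans hGs) hs).2 htG⟩,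
    Nat.card_Icc, Nat.add_sub_cancel]

lemma sum_sub_threshold (hG : Monotone G) (hGN : G N = k) :
    ∑ t ∈ Icc 1 k, (N - threshold G N t) = ∑ s ∈ Icc 1 (N - 1), G s := by
  calc ∑ t ∈ Icc 1 k, (N - threshold G N t)
      = ∑ t ∈ Icc 1 k, #{s ∈ Icc 1 (N - 1) | threshold G N t ≤ s} :=
        sum_congr rfl fun t ht => (card_filter_threshold_le_eq_sub (hGN ▸ (mem_Icc.1 ht).2)).symm
    _ = ∑ s ∈ Icc 1 (N - 1), #{t ∈ Icc 1 k | threshold G N t ≤ s} := by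
        simp only [card_filter]; exact sum_comm
    _ = ∑ s ∈ Icc 1 (N - 1), G s :=
        sum_congr rfl fun s hs =>
          card_filter_threshold_le_eq_apply hG hGN (Icc_subset_Icc_right (Nat.sub_le N 1) hs)

end Threshold

lemma mul_sub_one_le_two_mul_sum {F : ℕ → ℕ} {N k : ℕ}
    (hF : ∀ s ∈ Icc 1 (N - 1), k ≤ F s + F (N - s)) :
    k * (N - 1) ≤ 2 * ∑ s ∈ Icc 1 (N - 1), F s := by
  have hreflect : ∑ s ∈ Icc 1 (N - 1), F (N - s) = ∑ s ∈ Icc 1 (N - 1), F s := by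
    refine sum_nbij' (N - ·) (N - ·) ?_ ?_ ?_ ?_ fun _ _ => rfl <;>
      intro s hs <;> simp only [mem_Icc] at hs ⊢ <;> omega
  calc k * (N - 1) = ∑ _s ∈ Icc 1 (N - 1), k := by simp [mul_comm]
    _ ≤ ∑ s ∈ Icc 1 (N - 1), (F s + F (N - s)) := sum_le_sum hF
    _ = 2 * ∑ s ∈ Icc 1 (N - 1), F s := by rw [sum_add_distrib, hreflect, two_mul]

lemma sum_Icc_ite_le (q r s : ℕ) :
    ∑ l ∈ Icc 1 s, (if l ≤ r then q + 1 else q) = q * s + min s r := by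
  induction s with
  | zero => simp
  | succ s ih =>
    rw [sum_Icc_succ_top (by omega), ih]
    split_ifs <;> grind

lemma mul_add_le_add_min_add_min {q r N s : ℕ} (hrN : r ≤ N) (hs : s ≤ N) :
    q * N + r ≤ (q * s + min s r) + (q * (N - s) + min (N - s) r) := by
  have : q * s + q * (N - s) = q * N := by rw [← mul_add, Nat.add_sub_cancel' hs]
  omega

lemma mul_sub_one_le_two_mul_sum_sub_threshold {q r N k : ℕ} (hrN : r ≤ N) (hk : q * N + r = k) :
    k * (N - 1) ≤ 2 * ∑ t ∈ Icc 1 k,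
      (N - threshold (fun s => ∑ l ∈ Icc 1 s, if l ≤ r then q + 1 else q) N t) := by
  set G := fun s => ∑ l ∈ Icc 1 s, if l ≤ r then q + 1 else q
  have hGmono : Monotone G := fun a b hab => sum_le_sum_of_subset (Icc_subset_Icc_right hab)
  have hG : ∀ s, G s = q * s + min s r := sum_Icc_ite_le q r
  have hGN : G N = k := by rw [hG, min_eq_right hrN, hk]
  rw [sum_sub_threshold hGmono hGN]
  refine mul_sub_one_le_two_mul_sum fun s hs => ?_
  rw [hG, hG, ← hk]
  exact mul_add_le_add_min_add_min hrN (by simp only [mem_Icc] at hs; omega)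

lemma mbr_ratio_le {M n k nI S : ℝ} (hM : 0 < M) (hk : 1 ≤ k) (hkn : k < n) (hnI : 1 < nI)
    (hS : k * (nI - 1) ≤ 2 * S) :
    M * (nI - 1) / S / (2 * M * (n - 1) / (k * (2 * n - k - 1))) ≤ (2 * n - k - 1) / (n - 1) := by
  have hS0 : 0 < S := by nlinarith
  have hk0 : 0 < k := by linarith
  have hn1 : 0 < n - 1 := by linarith
  have hγ0 : M * (nI - 1) / S ≤ 2 * M / k := by
    rw [div_le_div_iff₀ hS0 hk0]; nlinarith
  have hγ1 : 0 < 2 * M * (n - 1) / (k * (2 * n - k - 1)) := by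
    have : 0 < 2 * n - k - 1 := by linarith
    positivity
  rw [div_le_iff₀ hγ1]
  calc M * (nI - 1) / S ≤ 2 * M / k := hγ0
    _ = (2 * n - k - 1) / (n - 1) * (2 * M * (n - 1) / (k * (2 * n - k - 1))) := by
      have : 2 * n - k - 1 ≠ 0 := by linarith
      field_simp

theorem mbr_ratio_bound_general (n nI k : ℕ) (M : ℝ)
    (hnI : 2 ≤ nI) (hk : nI < k) (hkn : k < n) (hM : 0 < M) (g h : ℕ → ℕ)
    (hg : ∀ m, g m = if m ≤ k % nI then k / nI + 1 else k / nI)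
    (hh : ∀ t, h t = sInf {s : ℕ | s ∈ Finset.Icc 1 nI ∧ t ≤ ∑ l ∈ Finset.Icc 1 s, g l}) :
    (M * ((nI : ℝ) - 1) / (∑ i ∈ Finset.Icc 1 k, ((nI : ℝ) - h i)))
        / (2 * M * ((n : ℝ) - 1) / ((k : ℝ) * (2 * (n : ℝ) - k - 1)))
      ≤ (2 * (n : ℝ) - k - 1) / ((n : ℝ) - 1) ∧
    (2 * (n : ℝ) - k - 1) / ((n : ℝ) - 1) = 2 - ((k : ℝ) - 1) / ((n : ℝ) - 1) := by
  have hθ : ∀ t, h t = threshold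
      (fun s => ∑ l ∈ Icc 1 s, if l ≤ k % nI then k / nI + 1 else k / nI) nI t := by
    intro t; simp only [hh, hg]; rfl
  have hcount := mul_sub_one_le_two_mul_sum_sub_threshold
    (Nat.mod_lt k (by omega : 0 < nI)).le (Nat.div_add_mod' k nI)
  have hS : (k : ℝ) * (nI - 1) ≤ 2 * ∑ i ∈ Icc 1 k, ((nI : ℝ) - h i) := by
    have hcast := (Nat.cast_le (α := ℝ)).2 hcount
    push_cast [Nat.cast_sub (by omega : 1 ≤ nI), Nat.cast_sub threshold_le_self] at hcast
    simpa only [hθ] using hcast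
  have hn1 : (n : ℝ) - 1 ≠ 0 := by
    have : (1 : ℝ) < n := by exact_mod_cast (by omega : 1 < n)
    linarith
  refine ⟨mbr_ratio_le hM (by exact_mod_cast (by omega : 1 ≤ k)) (by exact_mod_cast hkn)
    (by exact_mod_cast (by omega : 1 < nI)) hS, ?_⟩
  field_simp
  ring

/-- Ratio of the intra-cluster-only MBR bandwidth to the symmetric one:
`γ_mbr^(0)/γ_mbr^(1) ≤ (2n−k−1)/(n−1) = 2 − (k−1)/(n−1)`,
for `n = n_I·L`, `n > k > n_I ≥ 2`, `L ≥ 2`, `M > 0`. -/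
theorem mbr_ratio_bound (n nI k L : ℕ) (M : ℝ) (hL : 2 ≤ L) (hn : n = nI * L)
    (hnI : 2 ≤ nI) (hk : nI < k) (hkn : k < n) (hM : 0 < M) (g h : ℕ → ℕ)
    (hg : ∀ m, g m = if m ≤ k % nI then k / nI + 1 else k / nI)
    (hh : ∀ t, h t = sInf {s : ℕ | s ∈ Finset.Icc 1 nI ∧ t ≤ ∑ l ∈ Finset.Icc 1 s, g l}) :
    (M * ((nI : ℝ) - 1) / (∑ i ∈ Finset.Icc 1 k, ((nI : ℝ) - h i)))
        / (2 * M * ((n : ℝ) - 1) / ((k : ℝ) * (2 * (n : ℝ) - k - 1)))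
      ≤ (2 * (n : ℝ) - k - 1) / ((n : ℝ) - 1) ∧
    (2 * (n : ℝ) - k - 1) / ((n : ℝ) - 1) = 2 - ((k : ℝ) - 1) / ((n : ℝ) - 1) :=
  mbr_ratio_bound_general n nI k M hnI hk hkn hM g h hg hh
end

section
/- Intra-cluster repairable codes meet the locally-repairable-code bound with equality under the stated condition: for l_0 = n_I − 1, m_0 = n − k + 1, and α = M/(k − ⌊k/n_I⌋), the inequality m_0 ≤ n − ⌈M/α⌉ − ⌈M/(l_0·α)⌉ + 2 holds, with equality if k mod n_I ≠ 0. Equivalently: 0 ≤ ⌊k/n_I⌋ − ⌈(k − ⌊k/n_I⌋)/(n_I − 1)⌉ + 1, with equality iff k mod n_I ≠ 0. -/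
/-! Writing `k = d q + r` with `0 ≤ r < d`, one has `k - q = (d - 1) q + r`, so
`(k - q) / (d - 1) = q + r / (d - 1)` with `0 ≤ r / (d - 1) ≤ 1`. Its ceiling is therefore `q`
or `q + 1` according as `r = 0` or not, and `α` only rescales: `⌈M/α⌉ = k - q` and
`⌈M/(l₀ α)⌉ = ⌈(k - q)/(d - 1)⌉`. -/

lemma Nat.cast_sub_cast_div_eq {K : Type*} [Field K] (k d : ℕ) :
    (k : K) - (k / d : ℕ) = ((d : K) - 1) * (k / d : ℕ) + (k % d : ℕ) := by
  have h : ((d * (k / d) + k % d : ℕ) : K) = k := congrArg _ (Nat.div_add_mod k d)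
  push_cast at h
  linear_combination -h

lemma Int.ceil_natCast_div_eq_ite {K : Type*} [Field K] [LinearOrder K] [IsStrictOrderedRing K]
    [FloorRing K] {r : ℕ} {m : K} (hm : 0 < m) (hrm : (r : K) ≤ m) :
    ⌈(r : K) / m⌉ = if r = 0 then 0 else 1 := by
  split_ifs with hr
  · simp [hr]
  · rw [Int.ceil_eq_iff]
    constructor
    · rw [Int.cast_one, sub_self]
      exact div_pos (by exact_mod_cast Nat.pos_of_ne_zero hr) hm
    · simpa using (div_le_one hm).mpr hrm

lemma Int.ceil_sub_div_div_sub_one {K : Type*} [Field K] [LinearOrder K] [IsStrictOrderedRing K]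
    [FloorRing K] {d : ℕ} (hd : 2 ≤ d) (k : ℕ) :
    ⌈((k : K) - (k / d : ℕ)) / ((d : K) - 1)⌉ = (k / d : ℕ) + if k % d = 0 then 0 else 1 := by
  have hd1 : (0 : K) < (d : K) - 1 := by
    have : (2 : K) ≤ d := by exact_mod_cast hd
    linarith
  have hr : ((k % d : ℕ) : K) ≤ (d : K) - 1 := by
    have : ((k % d + 1 : ℕ) : K) ≤ d := by exact_mod_cast Nat.mod_lt k (by omega)
    push_cast at this
    linarith
  rw [Nat.cast_sub_cast_div_eq, add_div, mul_div_cancel_left₀ _ hd1.ne', Int.ceil_natCast_add,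
    Int.ceil_natCast_div_eq_ite hd1 hr, add_comm]

theorem irc_lrc_bound_general (n nI k : ℕ) (M : ℝ) (hnI : 2 ≤ nI) (hM : 0 < M) :
    ((n : ℤ) - k + 1)
      ≤ (n : ℤ) - ⌈M / (M / ((k : ℝ) - ((k / nI : ℕ) : ℝ)))⌉
          - ⌈M / (((nI : ℝ) - 1) * (M / ((k : ℝ) - ((k / nI : ℕ) : ℝ))))⌉ + 2 ∧
    (k % nI ≠ 0 →
      ((n : ℤ) - k + 1)
        = (n : ℤ) - ⌈M / (M / ((k : ℝ) - ((k / nI : ℕ) : ℝ)))⌉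
            - ⌈M / (((nI : ℝ) - 1) * (M / ((k : ℝ) - ((k / nI : ℕ) : ℝ))))⌉ + 2) := by
  rw [div_div_cancel₀ hM.ne', mul_comm, ← div_div, div_div_cancel₀ hM.ne',
    Int.ceil_sub_div_div_sub_one hnI, Int.ceil_sub_natCast, Int.ceil_natCast]
  split_ifs <;> omega

/-- Intra-cluster repairable codes meet the LRC bound: with `l_0 = n_I − 1`,
`m_0 = n − k + 1` and `α = M/(k − ⌊k/n_I⌋)`, one has
`m_0 ≤ n − ⌈M/α⌉ − ⌈M/(l_0·α)⌉ + 2`, with equality if `k % n_I ≠ 0`. -/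
theorem irc_lrc_bound (n nI k : ℕ) (M : ℝ) (hnI : 2 ≤ nI) (hk : nI < k) (hkn : k ≤ n)
    (hM : 0 < M) :
    ((n : ℤ) - k + 1)
      ≤ (n : ℤ) - ⌈M / (M / ((k : ℝ) - ((k / nI : ℕ) : ℝ)))⌉
          - ⌈M / (((nI : ℝ) - 1) * (M / ((k : ℝ) - ((k / nI : ℕ) : ℝ))))⌉ + 2 ∧
    (k % nI ≠ 0 →
      ((n : ℤ) - k + 1)
        = (n : ℤ) - ⌈M / (M / ((k : ℝ) - ((k / nI : ℕ) : ℝ)))⌉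
            - ⌈M / (((nI : ℝ) - 1) * (M / ((k : ℝ) - ((k / nI : ℕ) : ℝ))))⌉ + 2) :=
  irc_lrc_bound_general n nI k M hnI hM
end
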